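/- Let m ≥ 2 be an integer and let n > 8 be an integer divisible by 4. Then (1 + α(m))·(n!/2)^{m/2} ≤ ((n/2 − 2)!)·((n/2)!)·( ((n/2 − 1)!·((n/2) + 1)!)/2 )^{m−1}, as an inequality of real numbers. -/

import Mathlib

/-!
Write `n = 2k + 4` and `X = √(n!/2)`, so that the left side is `(1 + α(m)) X^m`. Put
`D = k! (k+2)!` and `B = (k+1)! (k+3)!/2`. The factorial estimates `2 X² ≤ D B` and `2 D ≤ B`
give `2 X ≤ B`, hence `2^(m-1) X^m = (2 X²)(2 X)^(m-2) ≤ D B^(m-1)`. Finally, all prime factors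
of `m` lie in `(1, m]`, so `α(m) ≤ m - 1` and `1 + α(m) ≤ 2^α(m) ≤ 2^(m-1)`.
-/

/-- `alpha m` = α(m): the number of distinct prime divisors of `m`. -/
def alpha (m : ℕ) : ℕ := m.primeFactors.card

open scoped Nat

lemma alpha_le_sub_one (m : ℕ) : alpha m ≤ m - 1 :=
  calc alpha m ≤ (Finset.Ioc 1 m).card := Finset.card_le_card fun _ hp =>
        Finset.mem_Ioc.2 ⟨(Nat.prime_of_mem_primeFactors hp).one_lt, Nat.le_of_mem_primeFactors hp⟩
    _ = m - 1 := Nat.card_Ioc 1 m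

lemma one_add_alpha_le_two_pow (m : ℕ) : 1 + alpha m ≤ 2 ^ (m - 1) :=
  calc 1 + alpha m ≤ 2 ^ alpha m := by rw [add_comm]; exact Nat.lt_two_pow_self
    _ ≤ 2 ^ (m - 1) := Nat.pow_le_pow_right two_pos (alpha_le_sub_one m)

namespace Nat

lemma two_mul_factorial_two_mul_add_four_le {k : ℕ} (hk : 3 ≤ k) :
    2 * (2 * k + 4)! ≤ k ! * (k + 1)! * (k + 2)! * (k + 3)! := by
  induction k, hk using Nat.le_induction with
  | base => decide
  | succ k hk ih =>
    calc 2 * (2 * (k + 1) + 4)! = (2 * k + 6) * (2 * k + 5) * (2 * (2 * k + 4)!) := by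
          rw [show 2 * (k + 1) + 4 = 2 * k + 4 + 1 + 1 by ring, factorial_succ, factorial_succ]
          ring
      _ ≤ (k + 1) * (k + 2) * (k + 3) * (k + 4) * (k ! * (k + 1)! * (k + 2)! * (k + 3)!) :=
          Nat.mul_le_mul ?_ ih
      _ = (k + 1)! * (k + 1 + 1)! * (k + 1 + 2)! * (k + 1 + 3)! := by
          simp only [factorial_succ]; ring
    calc (2 * k + 6) * (2 * k + 5) ≤ 4 * ((k + 3) * (k + 4)) := by nlinarith
      _ ≤ (k + 1) * (k + 2) * ((k + 3) * (k + 4)) := Nat.mul_le_mul_right _ (by nlinarith)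
      _ = (k + 1) * (k + 2) * (k + 3) * (k + 4) := by ring

lemma four_mul_factorial_mul_factorial_add_two_le {k : ℕ} (hk : 1 ≤ k) :
    4 * (k ! * (k + 2)!) ≤ (k + 1)! * (k + 3)! :=
  calc 4 * (k ! * (k + 2)!) ≤ (k + 1) * (k + 3) * (k ! * (k + 2)!) :=
        Nat.mul_le_mul_right _ (by nlinarith)
    _ = (k + 1)! * (k + 3)! := by simp only [factorial_succ]; ring

end Nat

lemma two_pow_mul_pow_le {R : Type*} [CommRing R] [LinearOrder R] [IsStrictOrderedRing R]
    {X D B : R} (hX : 0 ≤ X) (hB : 0 ≤ B) (hXDB : 2 * X ^ 2 ≤ D * B) (hDB : 2 * D ≤ B)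
    {m : ℕ} (hm : 2 ≤ m) : 2 ^ (m - 1) * X ^ m ≤ D * B ^ (m - 1) := by
  obtain ⟨k, rfl⟩ : ∃ k, m = k + 2 := ⟨m - 2, by omega⟩
  have hXB : 2 * X ≤ B := by nlinarith
  calc 2 ^ (k + 2 - 1) * X ^ (k + 2) = 2 * X ^ 2 * (2 * X) ^ k := by
        rw [show k + 2 - 1 = k + 1 by omega]; ring
    _ ≤ D * B * B ^ k :=
        mul_le_mul hXDB (pow_le_pow_left₀ (by positivity) hXB k) (by positivity) (by nlinarith)
    _ = D * B ^ (k + 2 - 1) := by rw [show k + 2 - 1 = k + 1 by omega]; ring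

/-- **Lemma 11 (2).** For `m ≥ 2` and `n > 8` divisible by `4`,
`(1 + α(m))·(n!/2)^(m/2) ≤ ((n/2-2)!)·((n/2)!)·(((n/2-1)!·((n/2)+1)!)/2)^(m-1)`
(over the reals, the exponent `m/2` being a real exponent). -/
theorem diagonal_bound_div_four (m : ℕ) (hm : 2 ≤ m) (n : ℕ) (hn : 8 < n) (h4 : 4 ∣ n) :
    (1 + (alpha m : ℝ)) * ((Nat.factorial n : ℝ) / 2) ^ ((m : ℝ) / 2) ≤
      (Nat.factorial (n / 2 - 2) : ℝ) * (Nat.factorial (n / 2) : ℝ) *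
        (((Nat.factorial (n / 2 - 1) : ℝ) * (Nat.factorial (n / 2 + 1) : ℝ)) / 2) ^ (m - 1) := by
  obtain ⟨k, hk, rfl⟩ : ∃ k, 3 ≤ k ∧ n = 2 * k + 4 := ⟨n / 2 - 2, by omega, by omega⟩
  rw [show (2 * k + 4) / 2 = k + 2 by omega, show k + 2 - 2 = k by omega,
    show k + 2 - 1 = k + 1 by omega, Real.rpow_div_two_eq_sqrt _ (by positivity),
    Real.rpow_natCast]
  have hXDB := Nat.two_mul_factorial_two_mul_add_four_le hk
  have hDB := Nat.four_mul_factorial_mul_factorial_add_two_le (by omega : 1 ≤ k)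
  have hα : (1 + alpha m : ℝ) ≤ 2 ^ (m - 1) := by exact_mod_cast one_add_alpha_le_two_pow m
  calc (1 + (alpha m : ℝ)) * √((2 * k + 4)! / 2 : ℝ) ^ m
      ≤ 2 ^ (m - 1) * √((2 * k + 4)! / 2 : ℝ) ^ m := by gcongr
    _ ≤ _ := by
      refine two_pow_mul_pow_le (by positivity) (by positivity) ?_ ?_ hm
      · rw [Real.sq_sqrt (by positivity)]
        have : (2 * (2 * k + 4)! : ℝ) ≤ k ! * (k + 1)! * (k + 2)! * (k + 3)! := by
          exact_mod_cast hXDB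
        linarith
      · have : (4 * (k ! * (k + 2)!) : ℝ) ≤ (k + 1)! * (k + 3)! := by exact_mod_cast hDB
        linarith
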